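/- arXiv:2206.09973 — 3 statements merged into one kernel-verified Lean document; each statement's English description precedes it below -/
import Mathlib

section
/- Let F be a finite field, m ≥ 1, and let C1 ⊆ F^{n_1}, …, C_m ⊆ F^{n_m} be proper linear subspaces (C_i ≠ F^{n_i} for all i). If the collection (C_1, …, C_m) is ρ-product-expanding, then for every nonempty subset I = {i_1 < … < i_t} ⊆ {1,…,m}, the subcollection (C_{i_1}, …, C_{i_t}) is ρ-product-expanding (with respect to the grid [n_{i_1}] × … × [n_{i_t}]). -/
open Matrix Finset

namespace RTC

variable {F : Type*} [Field F] [Fintype F]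

/-- All columns of the matrix `a` lie in the code `C`. -/
def colsIn {n1 n2 : ℕ} (C : Submodule F (Fin n1 → F)) (a : Matrix (Fin n1) (Fin n2) F) : Prop :=
  ∀ j : Fin n2, (fun i => a i j) ∈ C

/-- All rows of the matrix `a` lie in the code `C`. -/
def rowsIn {n1 n2 : ℕ} (C : Submodule F (Fin n2 → F)) (a : Matrix (Fin n1) (Fin n2) F) : Prop :=
  ∀ i : Fin n1, (fun j => a i j) ∈ C

/-- Hamming weight of a matrix: the number of nonzero entries. -/
noncomputable def mwt {n1 n2 : ℕ} (x : Matrix (Fin n1) (Fin n2) F) : ℕ :=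
  Nat.card {p : Fin n1 × Fin n2 // x p.1 p.2 ≠ 0}

/-- The number of nonzero columns of a matrix (`|x|_1`). -/
noncomputable def colWt {n1 n2 : ℕ} (x : Matrix (Fin n1) (Fin n2) F) : ℕ :=
  Nat.card {j : Fin n2 // (fun i => x i j) ≠ 0}

/-- The number of nonzero rows of a matrix (`|x|_2`). -/
noncomputable def rowWt {n1 n2 : ℕ} (x : Matrix (Fin n1) (Fin n2) F) : ℕ :=
  Nat.card {i : Fin n1 // (fun j => x i j) ≠ 0}

/-- Hamming weight of a vector. -/
noncomputable def vwt {n : ℕ} (v : Fin n → F) : ℕ := Nat.card {i : Fin n // v i ≠ 0}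

/-- Membership in `C1 ⊞ C2`: `c = a1 + a2` with all columns of `a1` in `C1`
and all rows of `a2` in `C2`. -/
def memBoxPlus {n1 n2 : ℕ} (C1 : Submodule F (Fin n1 → F)) (C2 : Submodule F (Fin n2 → F))
    (c : Matrix (Fin n1) (Fin n2) F) : Prop :=
  ∃ a1 a2 : Matrix (Fin n1) (Fin n2) F, colsIn C1 a1 ∧ rowsIn C2 a2 ∧ c = a1 + a2

/-- The pair `(C1, C2)` is `ρ`-product-expanding: every `c ∈ C1 ⊞ C2` can be written as
`c = a1 + a2` (columns of `a1` in `C1`, rows of `a2` in `C2`) with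
`ρ·(n1·|a1|_1 + n2·|a2|_2) ≤ |c|`. -/
def ProductExpanding {n1 n2 : ℕ} (ρ : ℝ) (C1 : Submodule F (Fin n1 → F))
    (C2 : Submodule F (Fin n2 → F)) : Prop :=
  ∀ c : Matrix (Fin n1) (Fin n2) F, memBoxPlus C1 C2 c →
    ∃ a1 a2 : Matrix (Fin n1) (Fin n2) F, colsIn C1 a1 ∧ rowsIn C2 a2 ∧ c = a1 + a2 ∧
      ρ * ((n1 : ℝ) * (colWt a1 : ℝ) + (n2 : ℝ) * (rowWt a2 : ℝ)) ≤ (mwt c : ℝ)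

/-- `C1 ⊗ F^{n2}` viewed as a submodule of matrices: all columns lie in `C`. -/
def colSp {n1 : ℕ} (n2 : ℕ) (C : Submodule F (Fin n1 → F)) :
    Submodule F (Matrix (Fin n1) (Fin n2) F) where
  carrier := {a | ∀ j : Fin n2, (fun i => a i j) ∈ C}
  add_mem' := by
    intro a b ha hb j
    exact C.add_mem (ha j) (hb j)
  zero_mem' := by
    intro j
    exact C.zero_mem
  smul_mem' := by
    intro r a ha j
    exact C.smul_mem r (ha j)

/-- `F^{n1} ⊗ C` viewed as a submodule of matrices: all rows lie in `C`. -/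
def rowSp (n1 : ℕ) {n2 : ℕ} (C : Submodule F (Fin n2 → F)) :
    Submodule F (Matrix (Fin n1) (Fin n2) F) where
  carrier := {a | ∀ i : Fin n1, (fun j => a i j) ∈ C}
  add_mem' := by
    intro a b ha hb i
    exact C.add_mem (ha i) (hb i)
  zero_mem' := by
    intro i
    exact C.zero_mem
  smul_mem' := by
    intro r a ha i
    exact C.smul_mem r (ha i)

/-- The tensor product code `C1 ⊗ C2`: all columns in `C1` and all rows in `C2`. -/
def tens {n1 n2 : ℕ} (C1 : Submodule F (Fin n1 → F)) (C2 : Submodule F (Fin n2 → F)) :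
    Submodule F (Matrix (Fin n1) (Fin n2) F) :=
  colSp n2 C1 ⊓ rowSp n1 C2

/-- The dual code `C^⊥`. -/
def dualCode {n : ℕ} (C : Submodule F (Fin n → F)) : Submodule F (Fin n → F) where
  carrier := {y | ∀ c ∈ C, ∑ i, y i * c i = 0}
  add_mem' := by
    intro a b ha hb c hc
    have h2 : ∑ i, (a + b) i * c i = (∑ i, a i * c i) + ∑ i, b i * c i := by
      rw [← Finset.sum_add_distrib]; congr 1; funext i
      show (a i + b i) * c i = _; ring
    rw [h2, ha c hc, hb c hc, add_zero]
  zero_mem' := by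
    intro c hc
    simp
  smul_mem' := by
    intro r a ha c hc
    have h2 : ∑ i, (r • a) i * c i = r * ∑ i, a i * c i := by
      rw [Finset.mul_sum]; congr 1; funext i
      show (r * a i) * c i = _; ring
    rw [h2, ha c hc, mul_zero]

/-- Normalized distance `δ(x, S) = min_{s ∈ S} |x − s| / n²` of a matrix to a set of matrices. -/
noncomputable def ndelta {n : ℕ} (x : Matrix (Fin n) (Fin n) F)
    (S : Set (Matrix (Fin n) (Fin n) F)) : ℝ :=
  sInf ((fun s => (mwt (x - s) : ℝ) / ((n : ℝ) ^ 2)) '' S)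

/-- The code `C1 ⊗ C2` is `ρ`-robustly testable. -/
def RobustlyTestable {n : ℕ} (ρ : ℝ) (C1 C2 : Submodule F (Fin n → F)) : Prop :=
  ∀ x : Matrix (Fin n) (Fin n) F,
    ρ * ndelta x (tens C1 C2 : Set (Matrix (Fin n) (Fin n) F)) ≤
      (ndelta x (colSp n C1 : Set (Matrix (Fin n) (Fin n) F)) +
       ndelta x (rowSp n C2 : Set (Matrix (Fin n) (Fin n) F))) / 2

/-- The code `C1 ⊗ C2` is `ρ`-agreement testable. -/
def AgreementTestable {n : ℕ} (ρ : ℝ) (C1 C2 : Submodule F (Fin n → F)) : Prop :=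
  ∀ c1 c2 : Matrix (Fin n) (Fin n) F, colsIn C1 c1 → rowsIn C2 c2 →
    ∃ c : Matrix (Fin n) (Fin n) F, colsIn C1 c ∧ rowsIn C2 c ∧
      ρ * ((colWt (c1 - c) : ℝ) + (rowWt (c2 - c) : ℝ)) ≤ (mwt (c1 - c2) : ℝ) / (n : ℝ)

/-- The `q`-ary entropy function. -/
noncomputable def Hq (q : ℕ) (x : ℝ) : ℝ :=
  x * Real.logb q (q - 1) - x * Real.logb q x - (1 - x) * Real.logb q (1 - x)

/-- A subspace is `α`-sparse if it is spanned by vectors of Hamming weight at most `α·n`. -/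
def Sparse {n : ℕ} (α : ℝ) (V : Submodule F (Fin n → F)) : Prop :=
  ∃ S : Set (Fin n → F), (∀ v ∈ S, (vwt v : ℝ) ≤ α * n) ∧ Submodule.span F S = V

/-- The Gaussian (`q`-ary) binomial coefficient, as a real number. -/
noncomputable def qBinom (q n k : ℕ) : ℝ :=
  ∏ i ∈ Finset.range k, ((q : ℝ) ^ (n - i) - 1) / ((q : ℝ) ^ (k - i) - 1)

/-- Minimal Hamming distance from a vector to a code. -/
noncomputable def vdist {n : ℕ} (v : Fin n → F) (C : Submodule F (Fin n → F)) : ℕ :=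
  sInf {d : ℕ | ∃ c ∈ C, vwt (v - c) = d}

/-- A codeword `x ∈ C1 ⊞ C2` is `Δ`-minimal. -/
def DeltaMinimal {n : ℕ} (C1 C2 : Submodule F (Fin n → F)) (Δ : ℝ)
    (x : Matrix (Fin n) (Fin n) F) : Prop :=
  (∀ i : Fin n, (vwt (fun j => x i j) : ℝ) ≤ (vdist (fun j => x i j) C2 : ℝ) + Δ) ∧
  (∀ j : Fin n, (vwt (fun i => x i j) : ℝ) ≤ (vdist (fun i => x i j) C1 : ℝ) + Δ)

/-- Hamming weight of the submatrix of `x` with rows in `A` and columns in `B`. -/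
noncomputable def subWt {n : ℕ} (x : Matrix (Fin n) (Fin n) F) (A B : Finset (Fin n)) : ℕ :=
  Nat.card {p : Fin n × Fin n // p.1 ∈ A ∧ p.2 ∈ B ∧ x p.1 p.2 ≠ 0}

/-- The pair `(C1, C2)` is `(s, m, β)`-product-expanding. -/
def SMBExpanding {n : ℕ} (s m β : ℝ) (C1 C2 : Submodule F (Fin n → F)) : Prop :=
  ∀ x : Matrix (Fin n) (Fin n) F, memBoxPlus C1 C2 x → x ≠ 0 →
    DeltaMinimal C1 C2 (β * n) x →
    ∀ A B : Finset (Fin n), (n : ℝ) - m ≤ (A.card : ℝ) → (n : ℝ) - m ≤ (B.card : ℝ) →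
      s ≤ (subWt x A B : ℝ)

/-- The function `c` restricted to every line parallel to axis `i` lies in `C i`
(membership in `C^{(i)}`). -/
def axisIn {ι : Type*} [DecidableEq ι] {n : ι → ℕ} (C : ∀ i, Submodule F (Fin (n i) → F))
    (i : ι) (a : (∀ j, Fin (n j)) → F) : Prop :=
  ∀ y : ∀ j, Fin (n j), (fun s => a (Function.update y i s)) ∈ C i

/-- The number of grid points lying on a line parallel to axis `i` on which `a` is not
identically zero.  Since every such line contains exactly `n i` points, this equals
`n i · |a|_i` where `|a|_i` is the number of nonzero lines parallel to axis `i`. -/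
noncomputable def lineCnt {ι : Type*} [DecidableEq ι] {n : ι → ℕ} (i : ι)
    (a : (∀ j, Fin (n j)) → F) : ℕ :=
  Nat.card {y : ∀ j, Fin (n j) // (fun s : Fin (n i) => a (Function.update y i s)) ≠ 0}

/-- Hamming weight of an element of `F^{n_1 × … × n_m}`. -/
noncomputable def gwt {ι : Type*} {n : ι → ℕ} (a : (∀ j, Fin (n j)) → F) : ℕ :=
  Nat.card {y : ∀ j, Fin (n j) // a y ≠ 0}

/-- The collection `C` is `ρ`-product-expanding: every `c ∈ C_1 ⊞ … ⊞ C_m` can be written as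
`c = Σ_i a_i` with `a_i ∈ C^{(i)}` and `ρ · Σ_i n_i·|a_i|_i ≤ |c|`
(note `lineCnt i (a i) = n_i · |a_i|_i`). -/
def MProdExpanding {ι : Type*} [Fintype ι] [DecidableEq ι] {n : ι → ℕ} (ρ : ℝ)
    (C : ∀ i, Submodule F (Fin (n i) → F)) : Prop :=
  ∀ c : (∀ j, Fin (n j)) → F,
    (∃ a : ι → ((∀ j, Fin (n j)) → F), (∀ i, axisIn C i (a i)) ∧ c = ∑ i, a i) →
    ∃ a : ι → ((∀ j, Fin (n j)) → F), (∀ i, axisIn C i (a i)) ∧ c = ∑ i, a i ∧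
      ρ * (∑ i, (lineCnt i (a i) : ℝ)) ≤ (gwt c : ℝ)

end RTC

section Aux

variable {F : Type*} [Field F]

lemma exists_dual_vec {n : ℕ} (C : Submodule F (Fin n → F)) (h : C ≠ ⊤) :
    ∃ v : Fin n → F, v ≠ 0 ∧ ∀ c ∈ C, ∑ i, v i * c i = 0 := by
  obtain ⟨x, hx⟩ : ∃ x, x ∉ C := by
    by_contra h'; push_neg at h'; exact h (Submodule.eq_top_iff'.mpr h')
  rw [← Subspace.forall_mem_dualAnnihilator_apply_eq_zero_iff C x] at hx
  push_neg at hx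
  obtain ⟨φ, hφmem, hφx⟩ := hx
  set v : Fin n → F := fun i => φ (Pi.single i 1) with hv
  have key : ∀ y : Fin n → F, φ y = ∑ i, y i * v i := by
    intro y
    conv_lhs => rw [← Finset.univ_sum_single y]
    rw [map_sum]
    refine Finset.sum_congr rfl fun i _ => ?_
    have h1 : Pi.single i (y i) = y i • (Pi.single i (1 : F) : Fin n → F) := by
      funext j
      by_cases hj : j = i
      · subst hj; simp
      · simp [Pi.single_eq_of_ne hj]
    rw [h1, _root_.map_smul, smul_eq_mul, hv]
  refine ⟨v, ?_, ?_⟩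
  · intro hv0
    apply hφx
    rw [key x, hv0]
    simp
  · intro c hc
    have := (Submodule.mem_dualAnnihilator φ).mp hφmem c hc
    rw [key c] at this
    simpa [mul_comm] using this

lemma sum_eq_sum_update {ι : Type*} [DecidableEq ι] [Fintype ι] {π : ι → Type*}
    [∀ j, Fintype (π j)] [∀ j, DecidableEq (π j)] (i : ι) (d : π i)
    {M : Type*} [AddCommMonoid M] (g : (∀ j, π j) → M) :
    ∑ y, g y = ∑ z ∈ Finset.univ.filter (fun z : ∀ j, π j => z i = d),
      ∑ s, g (Function.update z i s) := by
  rw [← Finset.sum_product (f := fun p => g (Function.update p.1 i p.2))]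
  refine Finset.sum_nbij' (fun y => (Function.update y i d, y i))
    (fun p => Function.update p.1 i p.2) ?_ ?_ ?_ ?_ ?_
  · intro y _
    simp [Finset.mem_product]
  · intro p _
    simp
  · intro y _
    simp [Function.update_idem, Function.update_eq_self]
  · intro p hp
    simp only [Finset.mem_product, Finset.mem_filter, Finset.mem_univ, true_and] at hp
    ext1
    · simp only [Function.update_idem]
      rw [← hp.1, Function.update_eq_self]
    · simp
  · intro y _
    simp [Function.update_idem, Function.update_eq_self]

end Aux

/-- if a collection of proper codes is `ρ`-product-expanding, then so is every
nonempty subcollection. -/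
theorem statement13 (F : Type) [Field F] [Fintype F] (m : ℕ) (hm : 1 ≤ m)
    (n : Fin m → ℕ) (C : ∀ i : Fin m, Submodule F (Fin (n i) → F))
    (hproper : ∀ i, C i ≠ ⊤) (ρ : ℝ) (hρ : 0 < ρ)
    (hPE : RTC.MProdExpanding ρ C) (I : Finset (Fin m)) (hI : I.Nonempty) :
    RTC.MProdExpanding ρ (fun i : {i // i ∈ I} => C i.1) := by
  classical
  choose v hv0 hvC using fun i => exists_dual_vec (C i) (hproper i)
  have hex : ∀ i, ∃ s, v i s ≠ 0 := fun i => Function.ne_iff.mp (hv0 i)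
  choose k hk using hex
  set u : ∀ i, Fin (n i) → F := fun i s => if s = k i then (v i (k i))⁻¹ else 0 with hu
  have huv : ∀ (j) (s : Fin (n j)), v j s * u j s = if s = k j then (1 : F) else 0 := by
    intro j s
    by_cases h : s = k j
    · subst h; simp [hu, mul_inv_cancel₀ (hk j)]
    · simp [hu, h]
  have hu0 : ∀ (j) (s : Fin (n j)), s ≠ k j → u j s = 0 := by intro j s h; simp [hu, h]
  have huk : ∀ j, u j (k j) ≠ 0 := by intro j; simp [hu, inv_ne_zero (hk j)]
  intro c hc
  obtain ⟨a, haax, hasum⟩ := hc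
  set r : (∀ j : Fin m, Fin (n j)) → (∀ j : {i // i ∈ I}, Fin (n j.1)) :=
    fun y j => y j.1 with hr
  set L : (∀ j : {i // i ∈ I}, Fin (n j.1)) → (∀ j : Fin m, Fin (n j)) :=
    fun y' j => if h : j ∈ I then y' ⟨j, h⟩ else k j with hL
  set w' : (∀ j : Fin m, Fin (n j)) → F := fun y => ∏ j ∈ Iᶜ, u j (y j) with hw'
  set wv : (∀ j : Fin m, Fin (n j)) → F := fun y => ∏ j ∈ Iᶜ, v j (y j) with hwv
  set c' : (∀ j : Fin m, Fin (n j)) → F := fun y => c (r y) * w' y with hc'def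
  set T : ((∀ j : Fin m, Fin (n j)) → F) → ((∀ j : {i // i ∈ I}, Fin (n j.1)) → F) :=
    fun b y' => ∑ y : ∀ j : Fin m, Fin (n j), (if r y = y' then wv y * b y else 0) with hT
  -- basic update lemmas
  have hrL : ∀ y', r (L y') = y' := by
    intro y'; funext j'
    show (if h : j'.1 ∈ I then y' ⟨j'.1, h⟩ else k j'.1) = y' j'
    rw [dif_pos j'.2]
  have hr_upd_mem : ∀ (y : ∀ j : Fin m, Fin (n j)) (i : {i // i ∈ I}) (s : Fin (n i.1)),
      r (Function.update y i.1 s) = Function.update (r y) i s := by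
    intro y i s
    funext j'
    show Function.update y i.1 s j'.1 = Function.update (r y) i s j'
    rcases eq_or_ne j' i with h | h
    · subst h; simp
    · rw [Function.update_of_ne h, Function.update_of_ne (fun hh => h (Subtype.ext hh))]
  have hr_upd_not : ∀ (y : ∀ j : Fin m, Fin (n j)) (i : Fin m), i ∉ I → ∀ s : Fin (n i),
      r (Function.update y i s) = r y := by
    intro y i hiI s
    funext j'
    show Function.update y i s j'.1 = y j'.1
    exact Function.update_of_ne (fun hh => hiI (by rw [← hh]; exact j'.2)) _ _
  have hw'_upd : ∀ (y : ∀ j : Fin m, Fin (n j)) (i : Fin m), i ∈ I → ∀ s : Fin (n i),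
      w' (Function.update y i s) = w' y := by
    intro y i hiI s
    refine Finset.prod_congr rfl fun j hj => ?_
    rw [Function.update_of_ne (fun hh => (Finset.mem_compl.mp hj) (by rw [hh]; exact hiI))]
  have hwv_upd : ∀ (y : ∀ j : Fin m, Fin (n j)) (i : Fin m), i ∈ I → ∀ s : Fin (n i),
      wv (Function.update y i s) = wv y := by
    intro y i hiI s
    refine Finset.prod_congr rfl fun j hj => ?_
    rw [Function.update_of_ne (fun hh => (Finset.mem_compl.mp hj) (by rw [hh]; exact hiI))]
  -- extension of the decomposition to the full grid
  set A : ∀ i : Fin m, (∀ j : Fin m, Fin (n j)) → F :=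
    fun i y => if h : i ∈ I then a ⟨i, h⟩ (r y) * w' y else 0 with hA
  have hAax : ∀ i, RTC.axisIn C i (A i) := by
    intro i y
    by_cases hiI : i ∈ I
    · have heq : (fun s => A i (Function.update y i s)) =
          w' y • (fun s => a ⟨i, hiI⟩ (Function.update (r y) ⟨i, hiI⟩ s)) := by
        funext s
        show (if h : i ∈ I then a ⟨i, h⟩ (r (Function.update y i s)) *
            w' (Function.update y i s) else 0) = _
        rw [dif_pos hiI, hr_upd_mem y ⟨i, hiI⟩ s, hw'_upd y i hiI s]
        simp [mul_comm]
      rw [heq]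
      exact Submodule.smul_mem _ _ (haax ⟨i, hiI⟩ (r y))
    · have heq : (fun s => A i (Function.update y i s)) = 0 := by
        funext s
        show (if h : i ∈ I then a ⟨i, h⟩ (r (Function.update y i s)) *
            w' (Function.update y i s) else 0) = 0
        rw [dif_neg hiI]
      rw [heq]; exact Submodule.zero_mem _
  have hAsum : c' = ∑ i, A i := by
    funext y
    rw [Finset.sum_apply]
    have h1 : ∑ i : Fin m, A i y = ∑ i ∈ I, A i y := by
      refine (Finset.sum_subset (Finset.subset_univ I) ?_).symm
      intro i _ hiI
      show (if h : i ∈ I then a ⟨i, h⟩ (r y) * w' y else 0) = 0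
      rw [dif_neg hiI]
    have h2 : ∀ i : {x // x ∈ I}, A i.1 y = a i (r y) * w' y := by
      intro i
      show (if h : i.1 ∈ I then a ⟨i.1, h⟩ (r y) * w' y else 0) = _
      rw [dif_pos i.2]
    rw [h1, ← Finset.sum_attach I (fun i => A i y),
      Finset.sum_congr rfl (fun i _ => h2 i)]
    rw [hc'def]
    show c (r y) * w' y = _
    rw [hasum, Finset.sum_apply, Finset.sum_mul, Finset.univ_eq_attach]
  obtain ⟨b, hbax, hbsum, hbwt⟩ := hPE c' ⟨A, hAax, hAsum⟩
  have K1 : ∀ i : Fin m, i ∉ I → ∀ bb : (∀ j : Fin m, Fin (n j)) → F,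
      RTC.axisIn C i bb → T bb = 0 := by
    intro i hiI bb hb
    funext y'
    show ∑ y : ∀ j : Fin m, Fin (n j), (if r y = y' then wv y * bb y else 0) = 0
    rw [sum_eq_sum_update i (k i)]
    refine Finset.sum_eq_zero fun z hz => ?_
    have hrz : ∀ s, r (Function.update z i s) = r z := hr_upd_not z i hiI
    by_cases hy : r z = y'
    · have hterm : ∀ s : Fin (n i), (if r (Function.update z i s) = y' then
          wv (Function.update z i s) * bb (Function.update z i s) else 0)
          = (∏ j ∈ (Iᶜ).erase i, v j (z j)) * (v i s * bb (Function.update z i s)) := by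
        intro s
        rw [hrz s, if_pos hy]
        have hsplit : wv (Function.update z i s) =
            v i s * ∏ j ∈ (Iᶜ).erase i, v j (z j) := by
          show ∏ j ∈ Iᶜ, v j (Function.update z i s j) = _
          rw [← Finset.mul_prod_erase Iᶜ _ (Finset.mem_compl.mpr hiI)]
          congr 1
          · rw [Function.update_self]
          · refine Finset.prod_congr rfl fun j hj => ?_
            rw [Function.update_of_ne (Finset.ne_of_mem_erase hj)]
        rw [hsplit]; ring
      rw [Finset.sum_congr rfl (fun s _ => hterm s), ← Finset.mul_sum]
      rw [hvC i _ (hb z), mul_zero]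
    · refine Finset.sum_eq_zero fun s _ => ?_
      rw [hrz s, if_neg hy]
  have hprod1 : ∀ y', wv (L y') * w' (L y') = 1 := by
    intro y'
    show (∏ j ∈ Iᶜ, v j (L y' j)) * (∏ j ∈ Iᶜ, u j (L y' j)) = 1
    rw [← Finset.prod_mul_distrib]
    refine Finset.prod_eq_one fun j hj => ?_
    have hLj : L y' j = k j := by
      show (if h : j ∈ I then y' ⟨j, h⟩ else k j) = k j
      rw [dif_neg (Finset.mem_compl.mp hj)]
    rw [hLj, huv j (k j), if_pos rfl]
  have K4 : T c' = c := by
    funext y'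
    show ∑ y : ∀ j : Fin m, Fin (n j), (if r y = y' then wv y * c' y else 0) = c y'
    rw [Finset.sum_eq_single (L y')]
    · rw [if_pos (hrL y')]
      show wv (L y') * (c (r (L y')) * w' (L y')) = c y'
      rw [hrL y']
      rw [show wv (L y') * (c y' * w' (L y')) = c y' * (wv (L y') * w' (L y')) from by ring]
      rw [hprod1, mul_one]
    · intro y _ hyL
      by_cases hy : r y = y'
      · rw [if_pos hy]
        have hex2 : ∃ j, j ∉ I ∧ y j ≠ k j := by
          by_contra hcon
          push_neg at hcon
          apply hyL
          funext j
          by_cases hj : j ∈ I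
          · show y j = (if h : j ∈ I then y' ⟨j, h⟩ else k j)
            rw [dif_pos hj, ← hy]
          · show y j = (if h : j ∈ I then y' ⟨j, h⟩ else k j)
            rw [dif_neg hj]
            exact hcon j hj
        obtain ⟨j, hjI, hjk⟩ := hex2
        have hw0 : w' y = 0 := by
          show ∏ j ∈ Iᶜ, u j (y j) = 0
          exact Finset.prod_eq_zero (Finset.mem_compl.mpr hjI) (hu0 j (y j) hjk)
        show wv y * (c (r y) * w' y) = 0
        rw [hw0, mul_zero, mul_zero]
      · rw [if_neg hy]
    · intro h; exact absurd (Finset.mem_univ _) h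
  have hTsum : T c' = ∑ i : Fin m, T (b i) := by
    funext y'
    calc T c' y' = ∑ y, (if r y = y' then wv y * (∑ i, b i) y else 0) := by
          rw [hbsum]
      _ = ∑ y, ∑ i, (if r y = y' then wv y * b i y else 0) := by
          refine Finset.sum_congr rfl fun y _ => ?_
          rw [Finset.sum_apply]
          by_cases hy : r y = y'
          · rw [if_pos hy, Finset.mul_sum]
            exact Finset.sum_congr rfl fun i _ => (if_pos hy).symm
          · rw [if_neg hy]
            exact (Finset.sum_eq_zero fun i _ => if_neg hy).symm
      _ = ∑ i, ∑ y, (if r y = y' then wv y * b i y else 0) := Finset.sum_comm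
      _ = (∑ i : Fin m, T (b i)) y' := by rw [Finset.sum_apply]
  have hTc : c = ∑ i' : {i // i ∈ I}, T (b i'.1) := by
    rw [← K4, hTsum]
    have h1 : ∑ i : Fin m, T (b i) = ∑ i ∈ I, T (b i) := by
      refine (Finset.sum_subset (Finset.subset_univ I) ?_).symm
      intro i _ hiI
      exact K1 i hiI (b i) (hbax i)
    rw [h1, ← Finset.sum_attach I (fun i => T (b i)), Finset.univ_eq_attach]
  have K2 : ∀ (i : {i // i ∈ I}) (bb : (∀ j : Fin m, Fin (n j)) → F),
      RTC.axisIn C i.1 bb → RTC.axisIn (fun i' : {i // i ∈ I} => C i'.1) i (T bb) := by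
    intro i bb hb y'
    have heq : (fun s : Fin (n i.1) => T bb (Function.update y' i s)) =
        ∑ x : ∀ j : Fin m, Fin (n j),
          (if r x = y' then wv x else 0) • (fun s : Fin (n i.1) => bb (Function.update x i.1 s)) := by
      funext s
      rw [Finset.sum_apply]
      show ∑ y : ∀ j : Fin m, Fin (n j),
          (if r y = Function.update y' i s then wv y * bb y else 0)
          = ∑ x : ∀ j : Fin m, Fin (n j),
          (if r x = y' then wv x else 0) • bb (Function.update x i.1 s)
      have hrhs : ∀ x, (if r x = y' then wv x else 0) • bb (Function.update x i.1 s)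
          = (if r x = y' then wv x * bb (Function.update x i.1 s) else 0) := by
        intro x; by_cases hx : r x = y' <;> simp [hx]
      rw [Finset.sum_congr rfl fun x _ => hrhs x]
      rw [← Finset.sum_filter, ← Finset.sum_filter]
      refine Finset.sum_nbij' (fun y => Function.update y i.1 (y' i))
        (fun x => Function.update x i.1 s) ?_ ?_ ?_ ?_ ?_
      · intro y hy
        rw [Finset.mem_filter] at hy ⊢
        refine ⟨Finset.mem_univ _, ?_⟩
        rw [hr_upd_mem, hy.2, Function.update_idem, Function.update_eq_self]
      · intro x hx
        rw [Finset.mem_filter] at hx ⊢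
        refine ⟨Finset.mem_univ _, ?_⟩
        rw [hr_upd_mem, hx.2]
      · intro y hy
        rw [Finset.mem_filter] at hy
        have hyi : y i.1 = s := by
          have := congrFun hy.2 i
          rw [Function.update_self] at this
          exact this
        show Function.update (Function.update y (i.1) (y' i)) (i.1) s = y
        rw [Function.update_idem, ← hyi, Function.update_eq_self]
      · intro x hx
        rw [Finset.mem_filter] at hx
        have hxi : x i.1 = y' i := by
          have := congrFun hx.2 i
          exact this
        show Function.update (Function.update x (i.1) s) (i.1) (y' i) = x
        rw [Function.update_idem, ← hxi, Function.update_eq_self]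
      · intro y hy
        rw [Finset.mem_filter] at hy
        have hyi : y i.1 = s := by
          have := congrFun hy.2 i
          rw [Function.update_self] at this
          exact this
        rw [hwv_upd y i.1 i.2, Function.update_idem, ← hyi, Function.update_eq_self]
    rw [heq]
    exact Submodule.sum_mem _ fun x _ => Submodule.smul_mem _ _ (hb x)
  have K6 : ∀ (i : {i // i ∈ I}) (bb : (∀ j : Fin m, Fin (n j)) → F),
      RTC.lineCnt i (T bb) ≤ RTC.lineCnt i.1 bb := by
    intro i bb
    have key : ∀ y' : ∀ j : {i // i ∈ I}, Fin (n j.1),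
        (fun s : Fin (n i.1) => T bb (Function.update y' i s)) ≠ 0 →
        ∃ y : ∀ j : Fin m, Fin (n j), r y = y' ∧
          (fun t : Fin (n i.1) => bb (Function.update y i.1 t)) ≠ 0 := by
      intro y' hy'
      obtain ⟨s, hs⟩ := Function.ne_iff.mp hy'
      have hs' : ∑ y : ∀ j : Fin m, Fin (n j),
          (if r y = Function.update y' i s then wv y * bb y else 0) ≠ 0 := hs
      obtain ⟨y₀, -, hy₀⟩ := Finset.exists_ne_zero_of_sum_ne_zero hs'
      have hry₀ : r y₀ = Function.update y' i s := by
        by_contra hcon; rw [if_neg hcon] at hy₀; exact hy₀ rfl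
      have hbb : bb y₀ ≠ 0 := by
        rw [if_pos hry₀] at hy₀
        intro h0; rw [h0, mul_zero] at hy₀; exact hy₀ rfl
      refine ⟨Function.update y₀ i.1 (y' i), ?_, ?_⟩
      · rw [hr_upd_mem, hry₀, Function.update_idem, Function.update_eq_self]
      · have hline : (fun t : Fin (n i.1) =>
            bb (Function.update (Function.update y₀ i.1 (y' i)) i.1 t))
            = fun t : Fin (n i.1) => bb (Function.update y₀ i.1 t) := by
          funext t; rw [Function.update_idem]
        rw [hline]
        refine Function.ne_iff.mpr ⟨y₀ i.1, ?_⟩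
        rw [Function.update_eq_self]
        exact hbb
    unfold RTC.lineCnt
    have key' : ∀ y'' : {y' : ∀ j : {i // i ∈ I}, Fin (n j.1) //
        (fun s : Fin (n i.1) => T bb (Function.update y' i s)) ≠ 0},
        ∃ y : ∀ j : Fin m, Fin (n j), r y = y''.1 ∧
          (fun t : Fin (n i.1) => bb (Function.update y i.1 t)) ≠ 0 :=
      fun y'' => key y''.1 y''.2
    choose P hP1 hP2 using key'
    refine Nat.card_le_card_of_injective (fun y'' => ⟨P y'', hP2 y''⟩) ?_
    intro a₁ a₂ hab
    have hP : P a₁ = P a₂ := congrArg Subtype.val hab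
    refine Subtype.ext ?_
    rw [← hP1 a₁, ← hP1 a₂, hP]
  have K3 : RTC.gwt c' = RTC.gwt c := by
    unfold RTC.gwt
    have hto : ∀ y : ∀ j : Fin m, Fin (n j), c' y ≠ 0 → c (r y) ≠ 0 := by
      intro y h h0
      exact h (by show c (r y) * w' y = 0; rw [h0, zero_mul])
    have hinv : ∀ y' : ∀ j : {i // i ∈ I}, Fin (n j.1), c y' ≠ 0 → c' (L y') ≠ 0 := by
      intro y' h
      show c (r (L y')) * w' (L y') ≠ 0
      rw [hrL]
      refine mul_ne_zero h ?_
      show ∏ j ∈ Iᶜ, u j (L y' j) ≠ 0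
      refine Finset.prod_ne_zero_iff.mpr fun j hj => ?_
      have hLj : L y' j = k j := by
        show (if h : j ∈ I then y' ⟨j, h⟩ else k j) = k j
        rw [dif_neg (Finset.mem_compl.mp hj)]
      rw [hLj]; exact huk j
    have hLr : ∀ y : ∀ j : Fin m, Fin (n j), c' y ≠ 0 → L (r y) = y := by
      intro y h
      funext j
      show (if hj : j ∈ I then r y ⟨j, hj⟩ else k j) = y j
      by_cases hj : j ∈ I
      · rw [dif_pos hj]
      · rw [dif_neg hj]
        by_contra hne
        apply h
        show c (r y) * w' y = 0
        have hw0 : w' y = 0 := by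
          show ∏ j' ∈ Iᶜ, u j' (y j') = 0
          exact Finset.prod_eq_zero (Finset.mem_compl.mpr hj)
            (hu0 j (y j) (fun hh => hne hh.symm))
        rw [hw0, mul_zero]
    exact Nat.card_congr
      ⟨fun y => ⟨r y.1, hto y.1 y.2⟩,
       fun y' => ⟨L y'.1, hinv y'.1 y'.2⟩,
       fun y => Subtype.ext (hLr y.1 y.2),
       fun y' => Subtype.ext (hrL y'.1)⟩
  refine ⟨fun i' => T (b i'.1), fun i' => K2 i' (b i'.1) (hbax i'.1), hTc, ?_⟩
  have hsum1 : ∑ i' : {i // i ∈ I}, (RTC.lineCnt i' (T (b i'.1)) : ℝ)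
      ≤ ∑ i' : {i // i ∈ I}, (RTC.lineCnt i'.1 (b i'.1) : ℝ) :=
    Finset.sum_le_sum fun i' _ => Nat.cast_le.mpr (K6 i' (b i'.1))
  have hsum2 : ∑ i' : {i // i ∈ I}, (RTC.lineCnt i'.1 (b i'.1) : ℝ)
      ≤ ∑ i : Fin m, (RTC.lineCnt i (b i) : ℝ) := by
    rw [Finset.univ_eq_attach, Finset.sum_attach I (fun i => (RTC.lineCnt i (b i) : ℝ))]
    exact Finset.sum_le_sum_of_subset_of_nonneg (Finset.subset_univ I)
      (fun i _ _ => Nat.cast_nonneg _)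
  calc ρ * ∑ i' : {i // i ∈ I}, (RTC.lineCnt i' (T (b i'.1)) : ℝ)
      ≤ ρ * ∑ i : Fin m, (RTC.lineCnt i (b i) : ℝ) :=
        mul_le_mul_of_nonneg_left (le_trans hsum1 hsum2) hρ.le
    _ ≤ (RTC.gwt c' : ℝ) := hbwt
    _ = (RTC.gwt c : ℝ) := by rw [K3]
end

section
/- Let F be a finite field and C1, C2 ⊆ F^n proper linear subspaces (C1 ≠ F^n and C2 ≠ F^n). If the pair (C1, C2) is ρ-product-expanding, then it is (s, m, β)-product-expanding with s = ρ²·n²/3, m = ρ²·n/6, and β = ρ/3. -/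
open Matrix Finset

namespace RTC

variable {F : Type*} [Field F] [Fintype F]

section Helpers
variable {F : Type*} [Field F] [Fintype F]

open scoped Classical

lemma natCard_subtype {α : Type*} [Fintype α] (P : α → Prop) [DecidablePred P] :
    Nat.card {a // P a} = (Finset.univ.filter P).card := by
  rw [Nat.card_eq_fintype_card, Fintype.card_subtype]

lemma vwt_eq {n : ℕ} (v : Fin n → F) :
    vwt v = (Finset.univ.filter fun j => v j ≠ 0).card := natCard_subtype _

lemma colWt_eq {n1 n2 : ℕ} (a : Matrix (Fin n1) (Fin n2) F) :
    colWt a = (Finset.univ.filter fun j : Fin n2 => (fun i => a i j) ≠ 0).card :=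
  natCard_subtype _

lemma rowWt_eq {n1 n2 : ℕ} (a : Matrix (Fin n1) (Fin n2) F) :
    rowWt a = (Finset.univ.filter fun i : Fin n1 => (fun j => a i j) ≠ 0).card :=
  natCard_subtype _

lemma mwt_eq {n1 n2 : ℕ} (x : Matrix (Fin n1) (Fin n2) F) :
    mwt x = (Finset.univ.filter fun p : Fin n1 × Fin n2 => x p.1 p.2 ≠ 0).card :=
  natCard_subtype _

lemma subWt_eq {n : ℕ} (x : Matrix (Fin n) (Fin n) F) (A B : Finset (Fin n)) :
    subWt x A B =
      (Finset.univ.filter fun p : Fin n × Fin n =>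
        p.1 ∈ A ∧ p.2 ∈ B ∧ x p.1 p.2 ≠ 0).card :=
  natCard_subtype _

lemma vwt_le_vwt {n : ℕ} {v : Fin n → F} {w : Fin n → F}
    (h : ∀ j, v j ≠ 0 → w j ≠ 0) : vwt v ≤ vwt w := by
  rw [vwt_eq, vwt_eq]
  apply Finset.card_le_card
  intro j hj
  simp only [Finset.mem_filter, Finset.mem_univ, true_and] at *
  exact h j hj

lemma vwt_sub_le {n : ℕ} (u w : Fin n → F) :
    vwt u ≤ vwt (fun j => u j + w j) + vwt w := by
  rw [vwt_eq, vwt_eq, vwt_eq]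
  refine le_trans (Finset.card_le_card ?_) (Finset.card_union_le _ _)
  intro j hj
  simp only [Finset.mem_filter, Finset.mem_univ, true_and, Finset.mem_union] at *
  by_contra hc
  push_neg at hc
  exact hj (by simpa [hc.2] using hc.1)

lemma vwt_row_le_colWt {n1 n2 : ℕ} (a : Matrix (Fin n1) (Fin n2) F) (i : Fin n1) :
    vwt (fun j => a i j) ≤ colWt a := by
  rw [vwt_eq, colWt_eq]
  apply Finset.card_le_card
  intro j hj
  simp only [Finset.mem_filter, Finset.mem_univ, true_and] at *
  exact fun hz => hj (congrFun hz i)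

lemma vwt_col_le_rowWt {n1 n2 : ℕ} (a : Matrix (Fin n1) (Fin n2) F) (j : Fin n2) :
    vwt (fun i => a i j) ≤ rowWt a := by
  rw [vwt_eq, rowWt_eq]
  apply Finset.card_le_card
  intro i hi
  simp only [Finset.mem_filter, Finset.mem_univ, true_and] at *
  exact fun hz => hi (congrFun hz j)

lemma eq_zero_of_colWt_eq_zero {n1 n2 : ℕ} {a : Matrix (Fin n1) (Fin n2) F}
    (h : colWt a = 0) : a = 0 := by
  rw [colWt_eq, Finset.card_eq_zero] at h
  funext i j
  have hcol : (fun i => a i j) = 0 := by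
    by_contra hc
    have : j ∈ Finset.univ.filter fun j : Fin n2 => (fun i => a i j) ≠ 0 :=
      Finset.mem_filter.2 ⟨Finset.mem_univ _, hc⟩
    simp [h] at this
  exact congrFun hcol i

lemma eq_zero_of_rowWt_eq_zero {n1 n2 : ℕ} {a : Matrix (Fin n1) (Fin n2) F}
    (h : rowWt a = 0) : a = 0 := by
  rw [rowWt_eq, Finset.card_eq_zero] at h
  funext i j
  have hrow : (fun j => a i j) = 0 := by
    by_contra hc
    have : i ∈ Finset.univ.filter fun i : Fin n1 => (fun j => a i j) ≠ 0 :=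
      Finset.mem_filter.2 ⟨Finset.mem_univ _, hc⟩
    simp [h] at this
  exact congrFun hrow j

lemma vdist_le {n : ℕ} (v : Fin n → F) {C : Submodule F (Fin n → F)} {c : Fin n → F}
    (hc : c ∈ C) : vdist v C ≤ vwt (v - c) :=
  Nat.sInf_le ⟨c, hc, rfl⟩

lemma mwt_eq_sum_rows {n1 n2 : ℕ} (x : Matrix (Fin n1) (Fin n2) F) :
    mwt x = ∑ i, vwt (fun j => x i j) := by
  rw [mwt_eq, Finset.card_filter, Fintype.sum_prod_type]
  refine Finset.sum_congr rfl fun i _ => ?_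
  rw [vwt_eq, Finset.card_filter]

lemma mwt_le_subWt_add {n : ℕ} (x : Matrix (Fin n) (Fin n) F) (A B : Finset (Fin n)) :
    mwt x ≤ subWt x A B + ((∑ i ∈ Aᶜ, vwt fun j => x i j) + ∑ j ∈ Bᶜ, vwt fun i => x i j) := by
  have hA : Aᶜ = Finset.univ.filter fun i => i ∉ A := by ext i; simp
  have hB : Bᶜ = Finset.univ.filter fun j => j ∉ B := by ext j; simp
  rw [mwt_eq, subWt_eq, hA, hB, Finset.card_filter, Finset.card_filter,
    Fintype.sum_prod_type, Fintype.sum_prod_type, Finset.sum_filter, Finset.sum_filter]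
  have h1 : ∀ i : Fin n, (if i ∉ A then vwt (fun j => x i j) else 0)
      = ∑ j, if i ∉ A ∧ x i j ≠ 0 then 1 else 0 := by
    intro i
    by_cases hi : i ∉ A <;> simp [hi, vwt_eq, Finset.card_filter]
  have h2 : ∀ j : Fin n, (if j ∉ B then vwt (fun i => x i j) else 0)
      = ∑ i, if j ∉ B ∧ x i j ≠ 0 then 1 else 0 := by
    intro j
    by_cases hj : j ∉ B <;> simp [hj, vwt_eq, Finset.card_filter]
  simp only [h1, h2]
  rw [Finset.sum_comm (γ := Fin n) (f := fun j i => if j ∉ B ∧ x i j ≠ 0 then 1 else 0)]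
  rw [← Finset.sum_add_distrib, ← Finset.sum_add_distrib]
  refine Finset.sum_le_sum fun i _ => ?_
  rw [← Finset.sum_add_distrib, ← Finset.sum_add_distrib]
  refine Finset.sum_le_sum fun j _ => ?_
  by_cases hA' : i ∈ A <;> by_cases hB' : j ∈ B <;> by_cases hx : x i j = 0 <;>
    simp [hA', hB', hx]

end Helpers

section Dist
variable {F : Type*} [Field F] [Fintype F]

open scoped Classical

lemma vwt_zero {n : ℕ} : vwt (0 : Fin n → F) = 0 := by
  rw [vwt_eq]; simp

lemma vwt_zero' {n : ℕ} : vwt (fun _ : Fin n => (0:F)) = 0 := by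
  rw [vwt_eq]; simp

lemma colWt_le {n1 n2 : ℕ} (a : Matrix (Fin n1) (Fin n2) F) : colWt a ≤ n2 := by
  rw [colWt_eq]
  exact le_trans (Finset.card_filter_le _ _) (by simp)

lemma rowWt_le {n1 n2 : ℕ} (a : Matrix (Fin n1) (Fin n2) F) : rowWt a ≤ n1 := by
  rw [rowWt_eq]
  exact le_trans (Finset.card_filter_le _ _) (by simp)

lemma minDist_C1 {n : ℕ} {C1 C2 : Submodule F (Fin n → F)} {ρ : ℝ}
    (hρ : 0 < ρ) (hPE : ProductExpanding ρ C1 C2) {v : Fin n → F}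
    (hv : v ∈ C1) (hv0 : v ≠ 0) : ρ * n ≤ (vwt v : ℝ) := by
  obtain ⟨i0, hi0⟩ : ∃ i, v i ≠ 0 := by
    by_contra h; push_neg at h; exact hv0 (funext h)
  set xm : Matrix (Fin n) (Fin n) F := Matrix.of fun i j => if j = i0 then v i else 0 with hxm
  have hcols : colsIn C1 xm := by
    intro j
    by_cases h : j = i0
    · subst h
      convert hv using 1
      funext i; simp [hxm]
    · convert C1.zero_mem using 1
      funext i; simp [hxm, h]
  have hmem : memBoxPlus C1 C2 xm :=
    ⟨xm, 0, hcols, fun i => C2.zero_mem, (add_zero _).symm⟩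
  obtain ⟨b1, b2, hb1, hb2, heq, hineq⟩ := hPE xm hmem
  have hk : 1 ≤ colWt b1 + rowWt b2 := by
    by_contra h
    push_neg at h
    have h1 : colWt b1 = 0 := by omega
    have h2 : rowWt b2 = 0 := by omega
    have hz : xm = 0 := by
      rw [heq, eq_zero_of_colWt_eq_zero h1, eq_zero_of_rowWt_eq_zero h2, add_zero]
    exact hi0 (by simpa [hxm] using congrFun (congrFun hz i0) i0)
  have hmw : mwt xm ≤ vwt v := by
    rw [mwt_eq_sum_rows]
    have hrow : ∀ i, vwt (fun j => xm i j) ≤ (if v i ≠ 0 then 1 else 0) := by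
      intro i
      by_cases hvi : v i = 0
      · have hz : (fun j => xm i j) = (0 : Fin n → F) := by
          funext j; simp [hxm, hvi]
        simp [hz, vwt_zero, vwt_zero', hvi]
      · rw [if_pos hvi, vwt_eq]
        refine le_trans (Finset.card_le_card ?_) (le_of_eq (Finset.card_singleton i0))
        intro j hj
        simp only [Finset.mem_filter, Finset.mem_univ, true_and, Finset.mem_singleton] at *
        by_contra hne
        exact hj (if_neg hne)
    calc ∑ i, vwt (fun j => xm i j) ≤ ∑ i, (if v i ≠ 0 then 1 else 0) :=
          Finset.sum_le_sum fun i _ => hrow i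
      _ = vwt v := by rw [vwt_eq, Finset.card_filter]
  have hmwR : (mwt xm : ℝ) ≤ (vwt v : ℝ) := by exact_mod_cast hmw
  have hkR : (1:ℝ) ≤ (colWt b1 : ℝ) + (rowWt b2 : ℝ) := by exact_mod_cast hk
  have hn0 : (0:ℝ) ≤ n := Nat.cast_nonneg n
  nlinarith [mul_nonneg hρ.le (mul_nonneg hn0 (by linarith : (0:ℝ) ≤ (colWt b1 : ℝ) + (rowWt b2 : ℝ) - 1))]

lemma minDist_C2 {n : ℕ} {C1 C2 : Submodule F (Fin n → F)} {ρ : ℝ}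
    (hρ : 0 < ρ) (hPE : ProductExpanding ρ C1 C2) {v : Fin n → F}
    (hv : v ∈ C2) (hv0 : v ≠ 0) : ρ * n ≤ (vwt v : ℝ) := by
  obtain ⟨i0, hi0⟩ : ∃ i, v i ≠ 0 := by
    by_contra h; push_neg at h; exact hv0 (funext h)
  set xm : Matrix (Fin n) (Fin n) F := Matrix.of fun i j => if i = i0 then v j else 0 with hxm
  have hrows : rowsIn C2 xm := by
    intro i
    by_cases h : i = i0
    · subst h
      convert hv using 1
      funext j; simp [hxm]
    · convert C2.zero_mem using 1
      funext j; simp [hxm, h]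
  have hmem : memBoxPlus C1 C2 xm :=
    ⟨0, xm, fun j => C1.zero_mem, hrows, (zero_add _).symm⟩
  obtain ⟨b1, b2, hb1, hb2, heq, hineq⟩ := hPE xm hmem
  have hk : 1 ≤ colWt b1 + rowWt b2 := by
    by_contra h
    push_neg at h
    have h1 : colWt b1 = 0 := by omega
    have h2 : rowWt b2 = 0 := by omega
    have hz : xm = 0 := by
      rw [heq, eq_zero_of_colWt_eq_zero h1, eq_zero_of_rowWt_eq_zero h2, add_zero]
    exact hi0 (by simpa [hxm] using congrFun (congrFun hz i0) i0)
  have hmw : mwt xm ≤ vwt v := by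
    rw [mwt_eq_sum_rows]
    have hrow : ∀ i, vwt (fun j => xm i j) ≤ (if i = i0 then vwt v else 0) := by
      intro i
      by_cases hii : i = i0
      · subst hii
        simp only [if_true]
        apply le_of_eq
        congr 1
        funext j; simp [hxm]
      · have hz : (fun j => xm i j) = (0 : Fin n → F) := by
          funext j; simp [hxm, hii]
        simp [hz, vwt_zero, vwt_zero', hii]
    calc ∑ i, vwt (fun j => xm i j) ≤ ∑ i, (if i = i0 then vwt v else 0) :=
          Finset.sum_le_sum fun i _ => hrow i
      _ = vwt v := by simp
  have hmwR : (mwt xm : ℝ) ≤ (vwt v : ℝ) := by exact_mod_cast hmw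
  have hkR : (1:ℝ) ≤ (colWt b1 : ℝ) + (rowWt b2 : ℝ) := by exact_mod_cast hk
  have hn0 : (0:ℝ) ≤ n := Nat.cast_nonneg n
  nlinarith [mul_nonneg hρ.le (mul_nonneg hn0 (by linarith : (0:ℝ) ≤ (colWt b1 : ℝ) + (rowWt b2 : ℝ) - 1))]

end Dist
end RTC

set_option maxHeartbeats 1000000 in
/-- `ρ`-product-expansion implies `(s,m,β)`-product-expansion with
`s = ρ²n²/3`, `m = ρ²n/6`, `β = ρ/3`. -/
theorem statement15 (F : Type) [Field F] [Fintype F] {n : ℕ}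
    (C1 C2 : Submodule F (Fin n → F)) (hC1 : C1 ≠ ⊤) (hC2 : C2 ≠ ⊤)
    (ρ : ℝ) (hρ : 0 < ρ) (hPE : RTC.ProductExpanding ρ C1 C2) :
    RTC.SMBExpanding (ρ ^ 2 * (n : ℝ) ^ 2 / 3) (ρ ^ 2 * (n : ℝ) / 6) (ρ / 3) C1 C2 := by
  classical
  intro x hmem hx0 hmin A B hA hB
  obtain ⟨i00, j00, hx00⟩ : ∃ i j, x i j ≠ 0 := by
    by_contra h
    push_neg at h
    exact hx0 (by funext i j; exact h i j)
  have hn : 0 < n := i00.pos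
  have hN0 : (0:ℝ) < n := by exact_mod_cast hn
  obtain ⟨a1, a2, h1, h2, heq, hW⟩ := hPE x hmem
  -- decomposition identities
  have hrowdec : ∀ i : Fin n, (fun j => x i j) - (fun j => a2 i j) = fun j => a1 i j := by
    intro i; funext j
    simp only [Pi.sub_apply, heq, Matrix.add_apply]
    ring
  have hcoldec : ∀ j : Fin n, (fun i => x i j) - (fun i => a1 i j) = fun i => a2 i j := by
    intro j; funext i
    simp only [Pi.sub_apply, heq, Matrix.add_apply]
    ring
  -- row and column weight bounds from minimality
  have hrowbd : ∀ i : Fin n, (RTC.vwt (fun j => x i j) : ℝ) ≤ (RTC.colWt a1 : ℝ) + ρ / 3 * n := by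
    intro i
    have hd : RTC.vdist (fun j => x i j) C2 ≤ RTC.colWt a1 := by
      refine le_trans (RTC.vdist_le _ (h2 i)) ?_
      rw [hrowdec i]
      exact RTC.vwt_row_le_colWt a1 i
    have hdR : (RTC.vdist (fun j => x i j) C2 : ℝ) ≤ (RTC.colWt a1 : ℝ) := by exact_mod_cast hd
    have := hmin.1 i
    linarith
  have hcolbd : ∀ j : Fin n, (RTC.vwt (fun i => x i j) : ℝ) ≤ (RTC.rowWt a2 : ℝ) + ρ / 3 * n := by
    intro j
    have hd : RTC.vdist (fun i => x i j) C1 ≤ RTC.rowWt a2 := by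
      refine le_trans (RTC.vdist_le _ (h1 j)) ?_
      rw [hcoldec j]
      exact RTC.vwt_col_le_rowWt a2 j
    have hdR : (RTC.vdist (fun i => x i j) C1 : ℝ) ≤ (RTC.rowWt a2 : ℝ) := by exact_mod_cast hd
    have := hmin.2 j
    linarith
  -- x nonzero forces k1 + k2 ≥ 1
  have hk12 : 1 ≤ RTC.colWt a1 + RTC.rowWt a2 := by
    by_contra h
    push_neg at h
    have e1 : RTC.colWt a1 = 0 := by omega
    have e2 : RTC.rowWt a2 = 0 := by omega
    exact hx0 (by rw [heq, RTC.eq_zero_of_colWt_eq_zero e1, RTC.eq_zero_of_rowWt_eq_zero e2,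
      add_zero])
  -- one-sided bounds
  have hcase1 : 1 ≤ RTC.colWt a1 → ρ * n / 3 ≤ (RTC.rowWt a2 : ℝ) := by
    intro hk1
    obtain ⟨jj, hjj⟩ : ∃ j : Fin n, (fun i => a1 i j) ≠ 0 := by
      have hpos : 0 < (Finset.univ.filter fun j : Fin n => (fun i => a1 i j) ≠ 0).card := by
        rw [← RTC.colWt_eq]; omega
      obtain ⟨j, hj⟩ := Finset.card_pos.1 hpos
      exact ⟨j, (Finset.mem_filter.1 hj).2⟩
    have hd := RTC.minDist_C1 hρ hPE (h1 jj) hjj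
    have hsplit : RTC.vwt (fun i => a1 i jj) ≤
        RTC.vwt (fun i => x i jj) + RTC.vwt (fun i => a2 i jj) := by
      have h' := RTC.vwt_sub_le (fun i => a1 i jj) (fun i => a2 i jj)
      have he : (fun i => a1 i jj + a2 i jj) = fun i => x i jj := by
        funext i; rw [heq]; rfl
      rwa [he] at h'
    have h2' : RTC.vwt (fun i => a2 i jj) ≤ RTC.rowWt a2 := RTC.vwt_col_le_rowWt a2 jj
    have h3' := hcolbd jj
    have hsplitR : (RTC.vwt (fun i => a1 i jj) : ℝ) ≤
        (RTC.vwt (fun i => x i jj) : ℝ) + (RTC.rowWt a2 : ℝ) := by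
      have : (RTC.vwt (fun i => a1 i jj) : ℝ) ≤
          (RTC.vwt (fun i => x i jj) : ℝ) + (RTC.vwt (fun i => a2 i jj) : ℝ) := by
        exact_mod_cast hsplit
      have h2R : (RTC.vwt (fun i => a2 i jj) : ℝ) ≤ (RTC.rowWt a2 : ℝ) := by exact_mod_cast h2'
      linarith
    linarith
  have hcase2 : 1 ≤ RTC.rowWt a2 → ρ * n / 3 ≤ (RTC.colWt a1 : ℝ) := by
    intro hk2
    obtain ⟨ii, hii⟩ : ∃ i : Fin n, (fun j => a2 i j) ≠ 0 := by
      have hpos : 0 < (Finset.univ.filter fun i : Fin n => (fun j => a2 i j) ≠ 0).card := by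
        rw [← RTC.rowWt_eq]; omega
      obtain ⟨i, hi⟩ := Finset.card_pos.1 hpos
      exact ⟨i, (Finset.mem_filter.1 hi).2⟩
    have hd := RTC.minDist_C2 hρ hPE (h2 ii) hii
    have hsplit : RTC.vwt (fun j => a2 ii j) ≤
        RTC.vwt (fun j => x ii j) + RTC.vwt (fun j => a1 ii j) := by
      have h' := RTC.vwt_sub_le (fun j => a2 ii j) (fun j => a1 ii j)
      have he : (fun j => a2 ii j + a1 ii j) = fun j => x ii j := by
        funext j; rw [heq]; show a2 ii j + a1 ii j = a1 ii j + a2 ii j; ring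
      rwa [he] at h'
    have h2' : RTC.vwt (fun j => a1 ii j) ≤ RTC.colWt a1 := RTC.vwt_row_le_colWt a1 ii
    have h3' := hrowbd ii
    have hsplitR : (RTC.vwt (fun j => a2 ii j) : ℝ) ≤
        (RTC.vwt (fun j => x ii j) : ℝ) + (RTC.colWt a1 : ℝ) := by
      have : (RTC.vwt (fun j => a2 ii j) : ℝ) ≤
          (RTC.vwt (fun j => x ii j) : ℝ) + (RTC.vwt (fun j => a1 ii j) : ℝ) := by
        exact_mod_cast hsplit
      have h2R : (RTC.vwt (fun j => a1 ii j) : ℝ) ≤ (RTC.colWt a1 : ℝ) := by exact_mod_cast h2'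
      linarith
    linarith
  have hq : (0:ℝ) < ρ * n / 3 := by positivity
  -- both bounds hold
  have hks : ρ * n / 3 ≤ (RTC.colWt a1 : ℝ) ∧ ρ * n / 3 ≤ (RTC.rowWt a2 : ℝ) := by
    rcases Nat.eq_zero_or_pos (RTC.colWt a1) with h0 | hpos
    · have hk2 : 1 ≤ RTC.rowWt a2 := by omega
      have := hcase2 hk2
      rw [h0] at this
      simp only [Nat.cast_zero] at this
      linarith
    · have hk2r := hcase1 hpos
      have hk2pos : 1 ≤ RTC.rowWt a2 := by
        by_contra h
        push_neg at h
        have e : RTC.rowWt a2 = 0 := by omega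
        rw [e] at hk2r
        simp only [Nat.cast_zero] at hk2r
        linarith
      exact ⟨hcase2 hk2pos, hk2r⟩
  obtain ⟨hk1r, hk2r⟩ := hks
  -- upper bound on total weight by rows
  have hWup : (RTC.mwt x : ℝ) ≤ n * ((RTC.colWt a1 : ℝ) + ρ / 3 * n) := by
    rw [RTC.mwt_eq_sum_rows]
    push_cast
    calc ∑ i, (RTC.vwt (fun j => x i j) : ℝ)
        ≤ ∑ _i : Fin n, ((RTC.colWt a1 : ℝ) + ρ / 3 * n) :=
          Finset.sum_le_sum fun i _ => hrowbd i
      _ = n * ((RTC.colWt a1 : ℝ) + ρ / 3 * n) := by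
          rw [Finset.sum_const, Finset.card_univ, Fintype.card_fin, nsmul_eq_mul]
  -- ρ ≤ 1
  have hρ1 : ρ ≤ 1 := by
    by_contra hgt
    push_neg at hgt
    nlinarith [hW, hWup, mul_le_mul_of_nonneg_left hk2r (mul_nonneg hρ.le hN0.le),
      mul_nonneg (mul_nonneg (by linarith : (0:ℝ) ≤ ρ - 1) hN0.le) (Nat.cast_nonneg (RTC.colWt a1)),
      mul_pos (mul_pos (by linarith : (0:ℝ) < ρ - 1) hρ) (mul_pos hN0 hN0)]
  -- submatrix bound
  have hsubnat := RTC.mwt_le_subWt_add x A B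
  have hcardA : ((Aᶜ.card : ℝ)) ≤ ρ ^ 2 * n / 6 := by
    have hAn : A.card ≤ n := le_trans (Finset.card_le_univ A) (by simp)
    have : Aᶜ.card = n - A.card := by rw [Finset.card_compl]; simp
    rw [this]
    rw [Nat.cast_sub hAn]
    linarith
  have hcardB : ((Bᶜ.card : ℝ)) ≤ ρ ^ 2 * n / 6 := by
    have hBn : B.card ≤ n := le_trans (Finset.card_le_univ B) (by simp)
    have : Bᶜ.card = n - B.card := by rw [Finset.card_compl]; simp
    rw [this]
    rw [Nat.cast_sub hBn]
    linarith
  have hbd1 : (0:ℝ) ≤ (RTC.colWt a1 : ℝ) + ρ / 3 * n := by positivity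
  have hbd2 : (0:ℝ) ≤ (RTC.rowWt a2 : ℝ) + ρ / 3 * n := by positivity
  have hsumA : (∑ i ∈ Aᶜ, (RTC.vwt (fun j => x i j) : ℝ)) ≤
      (ρ ^ 2 * n / 6) * ((RTC.colWt a1 : ℝ) + ρ / 3 * n) := by
    calc (∑ i ∈ Aᶜ, (RTC.vwt (fun j => x i j) : ℝ))
        ≤ ∑ _i ∈ Aᶜ, ((RTC.colWt a1 : ℝ) + ρ / 3 * n) :=
          Finset.sum_le_sum fun i _ => hrowbd i
      _ = (Aᶜ.card : ℝ) * ((RTC.colWt a1 : ℝ) + ρ / 3 * n) := by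
          rw [Finset.sum_const, nsmul_eq_mul]
      _ ≤ (ρ ^ 2 * n / 6) * ((RTC.colWt a1 : ℝ) + ρ / 3 * n) :=
          mul_le_mul_of_nonneg_right hcardA hbd1
  have hsumB : (∑ j ∈ Bᶜ, (RTC.vwt (fun i => x i j) : ℝ)) ≤
      (ρ ^ 2 * n / 6) * ((RTC.rowWt a2 : ℝ) + ρ / 3 * n) := by
    calc (∑ j ∈ Bᶜ, (RTC.vwt (fun i => x i j) : ℝ))
        ≤ ∑ _j ∈ Bᶜ, ((RTC.rowWt a2 : ℝ) + ρ / 3 * n) :=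
          Finset.sum_le_sum fun j _ => hcolbd j
      _ = (Bᶜ.card : ℝ) * ((RTC.rowWt a2 : ℝ) + ρ / 3 * n) := by
          rw [Finset.sum_const, nsmul_eq_mul]
      _ ≤ (ρ ^ 2 * n / 6) * ((RTC.rowWt a2 : ℝ) + ρ / 3 * n) :=
          mul_le_mul_of_nonneg_right hcardB hbd2
  have hsubR : (RTC.mwt x : ℝ) ≤ (RTC.subWt x A B : ℝ)
      + (ρ ^ 2 * n / 6) * ((RTC.colWt a1 : ℝ) + ρ / 3 * n)
      + (ρ ^ 2 * n / 6) * ((RTC.rowWt a2 : ℝ) + ρ / 3 * n) := by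
    have hcast : (RTC.mwt x : ℝ) ≤ (RTC.subWt x A B : ℝ)
        + ((∑ i ∈ Aᶜ, (RTC.vwt (fun j => x i j) : ℝ))
          + ∑ j ∈ Bᶜ, (RTC.vwt (fun i => x i j) : ℝ)) := by
      exact_mod_cast hsubnat
    linarith
  -- final arithmetic
  have hKcoeff : (0:ℝ) ≤ ρ * n - ρ ^ 2 * n / 6 := by nlinarith [mul_nonneg hρ.le hN0.le]
  have hKlow : 2 * ρ * n / 3 ≤ (RTC.colWt a1 : ℝ) + (RTC.rowWt a2 : ℝ) := by linarith
  have step1 := mul_le_mul_of_nonneg_left hKlow hKcoeff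
  have hcube : (0:ℝ) ≤ ρ ^ 2 * n ^ 2 * (1 - ρ) :=
    mul_nonneg (mul_nonneg (sq_nonneg ρ) (sq_nonneg (n:ℝ))) (by linarith)
  nlinarith [hW, hsubR, step1, hcube, sq_nonneg (ρ * (n:ℝ))]
end

section
/- Let F be a finite field, n ≥ 1, and let C1, C2 ⊆ F^n be linear codes with C2^⊥ ⊆ C1 (the commutativity condition of a CSS code). Then the n×n identity matrix belongs to C1 ⊞ C2, and consequently the pair (C1, C2) is not ρ-product-expanding for any ρ > 1/n. -/
open Matrix Finset

/-- if `C2^⊥ ⊆ C1` (the CSS commutativity condition), then the identity matrix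
lies in `C1 ⊞ C2` and `(C1, C2)` is not `ρ`-product-expanding for any `ρ > 1/n`. -/
theorem statement17 (F : Type) [Field F] [Fintype F] (n : ℕ) (hn : 1 ≤ n)
    (C1 C2 : Submodule F (Fin n → F)) (hCSS : RTC.dualCode C2 ≤ C1) :
    RTC.memBoxPlus C1 C2 (1 : Matrix (Fin n) (Fin n) F) ∧
    ∀ ρ : ℝ, 1 / (n : ℝ) < ρ → ¬ RTC.ProductExpanding ρ C1 C2 := by
  classical
  obtain ⟨W, hW⟩ := Submodule.exists_isCompl C2
  set P := Submodule.linearProjOfIsCompl C2 W hW with hP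
  set v : Fin n → (Fin n → F) := fun i => (P (Pi.single i 1) : Fin n → F) with hv
  have hvm : ∀ i, v i ∈ C2 := fun i => (P (Pi.single i 1)).2
  have hrep : ∀ c : Fin n → F, ∑ i, c i • (Pi.single i (1 : F) : Fin n → F) = c := by
    intro c
    calc ∑ i, c i • (Pi.single i (1 : F) : Fin n → F)
        = ∑ i, (Pi.single i (c i) : Fin n → F) := by
          apply Finset.sum_congr rfl
          intro i _
          rw [← Pi.single_smul, smul_eq_mul, mul_one]
      _ = c := Finset.univ_sum_single c
  have hsum : ∀ c ∈ C2, ∑ i, c i • v i = c := by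
    intro c hc
    have h1 : (∑ i, c i • P (Pi.single i 1)) = P c := by
      conv_rhs => rw [← hrep c]
      simp only [map_sum, LinearMap.map_smul]
    have h2 : ((∑ i, c i • P (Pi.single i 1) : C2) : Fin n → F) = ∑ i, c i • v i := by
      rw [Submodule.coe_sum]
      apply Finset.sum_congr rfl
      intro i _
      rfl
    rw [← h2, h1]
    have h3 : P c = ⟨c, hc⟩ := Submodule.linearProjOfIsCompl_apply_left hW ⟨c, hc⟩
    rw [h3]
  set a2 : Matrix (Fin n) (Fin n) F := Matrix.of (fun i j => v i j) with ha2
  set a1 : Matrix (Fin n) (Fin n) F := 1 - a2 with ha1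
  have hcols : RTC.colsIn C1 a1 := by
    intro j
    apply hCSS
    intro c hc
    have e1 : ∑ i, (1 : Matrix (Fin n) (Fin n) F) i j * c i = c j := by
      simp [Matrix.one_apply, ite_mul]
    have e2 : ∑ i, a2 i j * c i = c j := by
      have := congrFun (hsum c hc) j
      rw [← this, Finset.sum_apply]
      apply Finset.sum_congr rfl
      intro i _
      simp [ha2, mul_comm]
    have : ∑ i, a1 i j * c i
        = (∑ i, (1 : Matrix (Fin n) (Fin n) F) i j * c i) - ∑ i, a2 i j * c i := by
      rw [← Finset.sum_sub_distrib]
      apply Finset.sum_congr rfl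
      intro i _
      simp [ha1, Matrix.sub_apply, sub_mul]
    rw [this, e1, e2, sub_self]
  have hrows : RTC.rowsIn C2 a2 := fun i => hvm i
  have hmem : RTC.memBoxPlus C1 C2 (1 : Matrix (Fin n) (Fin n) F) :=
    ⟨a1, a2, hcols, hrows, by rw [ha1]; abel⟩
  refine ⟨hmem, ?_⟩
  intro ρ hρ hPE
  obtain ⟨b1, b2, hb1, hb2, heq, hle⟩ := hPE 1 hmem
  have hmwt : RTC.mwt (1 : Matrix (Fin n) (Fin n) F) = n := by
    have e : {p : Fin n × Fin n // (1 : Matrix (Fin n) (Fin n) F) p.1 p.2 ≠ 0} ≃ Fin n :=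
      { toFun := fun p => p.1.1
        invFun := fun i => ⟨(i, i), by simp⟩
        left_inv := by
          rintro ⟨⟨i, j⟩, h⟩
          have hij : i = j := by
            by_contra hij
            exact h (Matrix.one_apply_ne hij)
          subst hij; rfl
        right_inv := fun i => rfl }
    rw [RTC.mwt, Nat.card_congr e, Nat.card_eq_fintype_card, Fintype.card_fin]
  have hdiag : ∀ i : Fin n, b1 i i ≠ 0 ∨ b2 i i ≠ 0 := by
    intro i
    by_contra h
    push_neg at h
    have h1 := congrFun (congrFun heq i) i
    rw [Matrix.one_apply_eq] at h1
    have h2 : b1 i i + b2 i i = (0 : F) := by rw [h.1, h.2, add_zero]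
    rw [show (b1 + b2) i i = b1 i i + b2 i i from rfl, h2] at h1
    exact one_ne_zero h1
  have key : n ≤ RTC.colWt b1 + RTC.rowWt b2 := by
    let f : Fin n → {j : Fin n // (fun i => b1 i j) ≠ 0} ⊕ {i : Fin n // (fun j => b2 i j) ≠ 0} :=
      fun i => if h : b1 i i ≠ 0 then Sum.inl ⟨i, fun hz => h (congrFun hz i)⟩
        else Sum.inr ⟨i, fun hz => ((hdiag i).resolve_left h) (congrFun hz i)⟩
    have hinj : Function.Injective f := by
      have hlf : ∀ i, Sum.elim (fun p => p.val) (fun p => p.val) (f i) = i := by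
        intro i
        by_cases h : b1 i i = 0 <;> simp [f, h]
      intro i i' hii
      rw [← hlf i, ← hlf i', hii]
    calc n = Nat.card (Fin n) := by rw [Nat.card_eq_fintype_card, Fintype.card_fin]
      _ ≤ _ := Nat.card_le_card_of_injective f hinj
      _ = RTC.colWt b1 + RTC.rowWt b2 := Nat.card_sum
  rw [hmwt] at hle
  have hn' : (1 : ℝ) ≤ (n : ℝ) := by exact_mod_cast hn
  have hkey : (n : ℝ) ≤ (RTC.colWt b1 : ℝ) + (RTC.rowWt b2 : ℝ) := by exact_mod_cast key
  have hnpos : (0 : ℝ) < (n : ℝ) := lt_of_lt_of_le zero_lt_one hn'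
  have h1 : (1 : ℝ) < ρ * n := by
    rw [div_lt_iff₀ hnpos] at hρ
    linarith
  nlinarith [mul_pos (sub_pos.2 h1) (lt_of_lt_of_le hnpos hkey), hle, hkey]
end
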